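/- arXiv:1403.5573 — 4 statements merged into one kernel-verified Lean document; each statement's English description precedes it below -/
import Mathlib

section
/- The characteristic polynomial of the 19×19 matrix A (ternary search tree urn matrix, entries as listed) is (λ-1)·λ·(λ+2)·(λ+3)²·(λ+4)⁴·(λ+5)³·(λ+6)³·(λ+7)²·(λ+8)·(λ+9), up to sign. -/
/-!
If `A * S = S * T` with `S` invertible, then `A` and `T` have the same characteristic polynomial,
and if `T` is upper triangular, that polynomial is `∏ (X - T i i)`. For `Atern` the columns of
`S = Atern.flagBasis` are (generalized) eigenvectors, ordered so that the span of the first `k`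
of them is `Atern`-invariant and projects isomorphically onto the first `k` coordinates, and then
put into column echelon form. So `S` is lower triangular with nonzero diagonal, hence invertible,
while `T = S⁻¹ * Atern * S` stays upper triangular with the eigenvalues on its diagonal; all
of this is checked by evaluating small integer matrices.
-/

open Polynomial

/-- The 19×19 replacement matrix of the Pólya urn for protected nodes in ternary
search trees. -/
def Atern : Matrix (Fin 19) (Fin 19) ℚ :=
  !![-9, 2, 0, 0, 0, 0, 0, 0, 0, 0, 0, 0, 0, 0, 0, 0, 0, 0, 0;
     0, -8, 4, 1, 0, 0, 0, 0, 0, 0, 0, 0, 0, 0, 0, 0, 0, 0, 0;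
     0, 0, -7, 0, 6, 0, 1, 0, 0, 0, 0, 0, 0, 0, 0, 0, 0, 0, 0;
     0, 0, 0, -7, 0, 0, 2, 0, 0, 0, 0, 0, 0, 0, 0, 0, 0, 0, 0;
     0, 0, 0, 0, -6, 0, 0, 0, 1, 0, 0, 0, 0, 0, 0, 0, 0, 0, 0;
     9, 0, 0, 0, 0, -6, 0, 2, 0, 0, 0, 0, 0, 0, 0, 0, 0, 0, 0;
     0, 0, 0, 0, 0, 0, -6, 0, 4, 2, 0, 0, 0, 0, 0, 0, 0, 0, 0;
     0, 6, 0, 0, 0, 0, 0, -5, 0, 0, 4, 1, 0, 0, 0, 0, 0, 0, 0;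
     0, 0, 0, 0, 0, 0, 0, 0, -5, 0, 0, 0, 2, 0, 0, 0, 0, 0, 0;
     0, 0, 0, 0, 0, 0, 0, 0, 0, -5, 0, 0, 2, 0, 0, 0, 0, 0, 0;
     0, 0, 3, 0, 0, 0, 0, 0, 0, 0, -4, 0, 0, 0, 1, 0, 0, 0, 0;
     0, 0, 0, 6, 0, 0, 0, 0, 0, 0, 0, -4, 0, 0, 2, 0, 0, 0, 0;
     9, 6, 3, 6, 0, 6, 3, 3, 0, 3, 0, 3, -4, 3, 0, 0, 0, 0, 0;
     0, 0, 0, 0, 0, 6, 0, 0, 0, 0, 0, 0, 0, -3, 0, 2, 0, 0, 0;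
     0, 0, 0, 0, 0, 0, 3, 0, 0, 0, 0, 0, 0, 0, -3, 0, 2, 0, 0;
     0, 0, 0, 0, 0, 0, 0, 3, 0, 0, 0, 0, 0, 0, 0, -2, 0, 1, 0;
     0, 0, 0, 0, 0, 0, 0, 0, 0, 3, 0, 0, 0, 0, 0, 0, -2, 0, 0;
     0, 0, 0, 0, 0, 0, 0, 0, 0, 0, 0, 3, 0, 0, 0, 0, 0, -1, 0;
     0, 0, 0, 0, 0, 0, 0, 0, 0, 0, 0, 0, 0, 3, 0, 0, 0, 0, 0]

namespace Matrix

variable {n : Type*} [Fintype n] [DecidableEq n]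

theorem charpoly_eq_of_mul_eq_mul {R : Type*} [CommRing R] {A S T : Matrix n n R}
    (hS : IsUnit S.det) (h : A * S = S * T) : A.charpoly = T.charpoly := by
  rw [← nonsing_inv_mul_cancel_left S T hS, ← h, charpoly_mul_comm,
    mul_nonsing_inv_cancel_right S A hS]

theorem charpoly_eq_prod_of_mul_eq_mul_of_triangular {K : Type*} [Field K] [LinearOrder n]
    {A S T : Matrix n n K} (hS : S.IsLowerTriangular) (hS₀ : ∀ i, S i i ≠ 0)
    (hT : T.IsUpperTriangular) (h : A * S = S * T) :
    A.charpoly = ∏ i, (X - C (T i i)) := by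
  have hdet : IsUnit S.det := by
    rw [det_of_isLowerTriangular S hS]
    exact (Finset.prod_ne_zero_iff.mpr fun i _ => hS₀ i).isUnit
  rw [charpoly_eq_of_mul_eq_mul hdet h, charpoly_of_isUpperTriangular T hT]

end Matrix

namespace Atern

def flagBasis : Matrix (Fin 19) (Fin 19) ℚ :=
  !![-2, 0, 0, 0, 0, 0, 0, 0, 0, 0, 0, 0, 0, 0, 0, 0, 0, 0, 0;
     -1, -2, 0, 0, 0, 0, 0, 0, 0, 0, 0, 0, 0, 0, 0, 0, 0, 0, 0;
     0, -3, 3, 0, 0, 0, 0, 0, 0, 0, 0, 0, 0, 0, 0, 0, 0, 0, 0;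
     0, 6, -6, -12, 0, 0, 0, 0, 0, 0, 0, 0, 0, 0, 0, 0, 0, 0, 0;
     0, -1, 1, 1, 2, 0, 0, 0, 0, 0, 0, 0, 0, 0, 0, 0, 0, 0, 0;
     7, -13, 15, 3, -41, -1, 0, 0, 0, 0, 0, 0, 0, 0, 0, 0, 0, 0, 0;
     0, 3, -3, -6, 12, 0, -12, 0, 0, 0, 0, 0, 0, 0, 0, 0, 0, 0, 0;
     2, 7, -3, 6, 10, 0, 18, 2, 0, 0, 0, 0, 0, 0, 0, 0, 0, 0, 0;
     0, 0, 0, 0, 6, 0, -6, 0, 2, 0, 0, 0, 0, 0, 0, 0, 0, 0, 0;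
     0, 0, 0, 0, 6, 0, -18, 0, 2, 66, 0, 0, 0, 0, 0, 0, 0, 0, 0;
     0, 6, -6, -3, -20, 0, 30, 1, 5, -101, -1, 0, 0, 0, 0, 0, 0, 0, 0;
     0, -15, 15, 30, 30, 0, -114, 2, -4, 688, -4, 4, 0, 0, 0, 0, 0, 0, 0;
     0, 0, 0, 0, 3, 0, -9, 0, 9, -21, 0, 0, -1, 0, 0, 0, 0, 0, 0;
     -8, 26, -30, -12, 24, 2, 126, -4, 18, -862, 4, -4, -2, -96, 0, 0, 0, 0, 0;
     0, -3, 3, 6, -30, 0, 42, 2, 8, -56, -4, 2, 0, -254, 2, 0, 0, 0, 0;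
     -1, -8, 6, -3, 27, 0, -87, -6, 1, 63, 6, -2, -3, -34, -2, -48, 0, 0, 0;
     0, 0, 0, 0, -9, 0, 27, 1, 4, -94, -2, 1, 0, -381, 3, 0, 208, 0, 0;
     0, 9, -9, -18, -18, 0, 90, -6, 12, -858, 12, -8, -4, 440, -8, -192, -464, -48, 0;
     3, -12, 14, 8, -2, -1, -87, 8, -9, 851, -11, 7, 4, -155, 5, 120, 232, 24, -1]

def triangularForm : Matrix (Fin 19) (Fin 19) ℚ :=
  !![-8, 2, 0, 0, 0, 0, 0, 0, 0, 0, 0, 0, 0, 0, 0, 0, 0, 0, 0;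
     0, -6, -3, 6, 0, 0, 0, 0, 0, 0, 0, 0, 0, 0, 0, 0, 0, 0, 0;
     0, 0, -9, 6, 8, 0, -4, 0, 0, 0, 0, 0, 0, 0, 0, 0, 0, 0, 0;
     0, 0, 0, -6, -6, 0, 4, 0, 0, 0, 0, 0, 0, 0, 0, 0, 0, 0, 0;
     0, 0, 0, 0, -4, 0, -3, 0, 1, 0, 0, 0, 0, 0, 0, 0, 0, 0, 0;
     0, 0, 0, 0, 0, -6, 39, -4, -41, 0, 0, 0, 0, 0, 0, 0, 0, 0, 0;
     0, 0, 0, 0, 0, 0, -5, 0, 0, -11, 0, 0, 0, 0, 0, 0, 0, 0, 0;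
     0, 0, 0, 0, 0, 0, 0, -2, 3, 241, -4, 2, 0, 0, 0, 0, 0, 0, 0;
     0, 0, 0, 0, 0, 0, 0, 0, 1, -54, 0, 0, -1, 0, 0, 0, 0, 0, 0;
     0, 0, 0, 0, 0, 0, 0, 0, 0, -7, 0, 0, 0, 0, 0, 0, 0, 0, 0;
     0, 0, 0, 0, 0, 0, 0, 0, 0, 0, -4, 0, -5, 254, -2, 0, 0, 0, 0;
     0, 0, 0, 0, 0, 0, 0, 0, 0, 0, 0, -4, -6, 127, -1, 0, 0, 0, 0;
     0, 0, 0, 0, 0, 0, 0, 0, 0, 0, 0, 0, -7, 288, 0, 0, 0, 0, 0;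
     0, 0, 0, 0, 0, 0, 0, 0, 0, 0, 0, 0, 0, -3, 0, 1, 0, 0, 0;
     0, 0, 0, 0, 0, 0, 0, 0, 0, 0, 0, 0, 0, 0, -3, 127, 208, 0, 0;
     0, 0, 0, 0, 0, 0, 0, 0, 0, 0, 0, 0, 0, 0, 0, -4, 1, 1, 0;
     0, 0, 0, 0, 0, 0, 0, 0, 0, 0, 0, 0, 0, 0, 0, 0, -5, 0, 0;
     0, 0, 0, 0, 0, 0, 0, 0, 0, 0, 0, 0, 0, 0, 0, 0, 0, -5, 0;
     0, 0, 0, 0, 0, 0, 0, 0, 0, 0, 0, 0, 0, 0, 0, 0, 0, 0, 0]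

theorem flagBasis_isLowerTriangular : flagBasis.IsLowerTriangular := by decide +kernel

theorem flagBasis_diag_ne_zero : ∀ i, flagBasis i i ≠ 0 := by decide +kernel

theorem triangularForm_isUpperTriangular : triangularForm.IsUpperTriangular := by
  decide +kernel

theorem triangularForm_diag :
    triangularForm.diag =
      ![-8, -6, -9, -6, -4, -6, -5, -2, 1, -7, -4, -4, -7, -3, -3, -4, -5, -5, 0] := by
  decide +kernel

theorem mul_flagBasis : Atern * flagBasis = flagBasis * triangularForm := by decide +kernel

end Atern

/-- The characteristic polynomial of `Atern` is
`(λ-1)·λ·(λ+2)·(λ+3)²·(λ+4)⁴·(λ+5)³·(λ+6)³·(λ+7)²·(λ+8)·(λ+9)`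
(both sides are monic, so "up to sign" is an exact equality). -/
theorem charpoly_Atern :
    Atern.charpoly =
      (X - 1) * X * (X + 2) * (X + 3) ^ 2 * (X + 4) ^ 4 * (X + 5) ^ 3 *
        (X + 6) ^ 3 * (X + 7) ^ 2 * (X + 8) * (X + 9) := by
  rw [Matrix.charpoly_eq_prod_of_mul_eq_mul_of_triangular Atern.flagBasis_isLowerTriangular
    Atern.flagBasis_diag_ne_zero Atern.triangularForm_isUpperTriangular Atern.mul_flagBasis]
  change ∏ i, (X - C (Atern.triangularForm.diag i)) = _
  rw [Atern.triangularForm_diag]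
  simp only [Fin.prod_univ_succ, Fin.prod_univ_zero, Matrix.cons_val_zero, Matrix.cons_val_succ,
    map_neg, map_one, map_zero, map_ofNat, sub_neg_eq_add]
  ring
end

section
/- For m ≥ 2, the characteristic polynomial of the (m-1)×(m-1) matrix A_W with entries A_W[i,i] = -i for 1 ≤ i ≤ m-1, A_W[i,i-1] = i for 2 ≤ i ≤ m-1, A_W[1,m-1] = m (replacing the diagonal entry when m-1 = 1 combines appropriately), and all other entries 0, equals φ_m(λ) = ∏_{i=1}^{m-1}(λ + i) - m!. -/
/-!
The characteristic matrix `X - A_W` is lower bidiagonal (diagonal `X + i`, subdiagonal `-i`) except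
for the corner entry `-m` in the top right. Expanding along the first row, the diagonal term has a
lower triangular minor and contributes `∏ (X + i)`; the corner term has an upper triangular minor
whose diagonal is the subdiagonal `-2, …, -(m-1)`, and the signs cancel to leave
`-m · (m-1)! = -m!`.
-/

open Polynomial

/-- The replacement matrix `A_W` for the classical `m`-ary search tree urn:
`A_W[i,i] = -i` (1-indexed), `A_W[i,i-1] = i`, `A_W[1,m-1] = m`
(entries are added, so that when `m = 2` the single entry is `-1 + 2 = 1`). -/
def AW (m : ℕ) : Matrix (Fin (m - 1)) (Fin (m - 1)) ℚ :=
  Matrix.of fun i j =>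
    (if i = j then -((i : ℚ) + 1) else 0) +
    (if (i : ℕ) = (j : ℕ) + 1 then (i : ℚ) + 1 else 0) +
    (if (i : ℕ) = 0 ∧ (j : ℕ) = m - 2 then (m : ℚ) else 0)

open Matrix Finset
open scoped Nat

namespace Matrix

variable {R : Type*} [CommRing R] {n : ℕ} (M : Matrix (Fin (n + 2)) (Fin (n + 2)) R)

theorem det_of_bidiagonal_add_corner
    (hupper : ∀ i j, i < j → (i ≠ 0 ∨ j ≠ Fin.last _) → M i j = 0)
    (hlower : ∀ i j : Fin (n + 2), (j : ℕ) + 1 < i → M i j = 0) :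
    M.det = ∏ i, M i i +
      (-1) ^ (n + 1) * M 0 (Fin.last _) * ∏ i : Fin (n + 1), M i.succ i.castSucc := by
  have hfirst : (M.submatrix Fin.succ Fin.succ).det = ∏ i : Fin (n + 1), M i.succ i.succ :=
    det_of_isLowerTriangular _ fun i j hij => hupper _ _ (Fin.succ_lt_succ_iff.2 hij)
      (.inl (Fin.succ_ne_zero i))
  have hlast : (M.submatrix Fin.succ Fin.castSucc).det = ∏ i : Fin (n + 1), M i.succ i.castSucc :=
    det_of_isUpperTriangular fun i j hij => hlower _ _ (by simpa using hij)
  rw [det_succ_row_zero, sum_eq_add_of_mem 0 (Fin.last _) (mem_univ _) (mem_univ _)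
    Fin.last_pos.ne fun j _ hj => ?_, Fin.prod_univ_succ]
  · simp only [Fin.succAbove_zero, Fin.succAbove_last, hfirst, hlast, Fin.val_zero, Fin.val_last,
      pow_zero, one_mul, mul_assoc]
  · rw [hupper 0 j (Fin.pos_iff_ne_zero.2 hj.1) (.inr hj.2), mul_zero, zero_mul]

theorem charpoly_of_bidiagonal_add_corner
    (hupper : ∀ i j, i < j → (i ≠ 0 ∨ j ≠ Fin.last _) → M i j = 0)
    (hlower : ∀ i j : Fin (n + 2), (j : ℕ) + 1 < i → M i j = 0) :
    M.charpoly = ∏ i, (X - C (M i i)) -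
      C (M 0 (Fin.last _) * ∏ i : Fin (n + 1), M i.succ i.castSucc) := by
  rw [charpoly, det_of_bidiagonal_add_corner _
    (fun i j hij hc => by
      rw [charmatrix_apply_ne _ _ _ hij.ne, hupper i j hij hc, map_zero, neg_zero])
    (fun i j hij => by
      rw [charmatrix_apply_ne _ _ _ (by omega), hlower i j hij, map_zero, neg_zero])]
  simp only [charmatrix_apply_eq, charmatrix_apply_ne _ _ _ Fin.castSucc_lt_succ.ne',
    charmatrix_apply_ne _ _ _ Fin.last_pos.ne, prod_neg, Finset.card_fin, map_mul, map_prod]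
  have hsign : (-1 : R[X]) ^ (n + 1) * (-1) ^ (n + 1) = 1 := by
    rw [← mul_pow, neg_one_mul, neg_neg, one_pow]
  linear_combination (-C (M 0 (Fin.last _)) * ∏ i : Fin (n + 1), C (M i.succ i.castSucc)) * hsign

end Matrix

theorem Finset.prod_fin_natCast_add_two {R : Type*} [CommSemiring R] (n : ℕ) :
    ∏ i : Fin n, ((i : R) + 2) = ((n + 1)! : R) := by
  rw [Fin.prod_univ_eq_prod_range (fun i => (i : R) + 2), ← prod_range_add_one_eq_factorial,
    prod_range_succ']
  push_cast
  simp only [mul_one, add_assoc, one_add_one_eq_two]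

namespace AW

theorem apply_of_lt {n : ℕ} {i j : Fin (n + 2)} (hij : i < j)
    (hcorner : i ≠ 0 ∨ j ≠ Fin.last _) :
    AW (n + 3) i j = 0 := by
  have : (i : ℕ) < j := hij
  simp only [ne_eq, Fin.ext_iff, Fin.val_zero, Fin.val_last] at hcorner
  simp only [AW, of_apply, Fin.ext_iff]
  split_ifs <;> first | omega | norm_num

theorem apply_of_succ_lt {m : ℕ} {i j : Fin (m - 1)} (hij : (j : ℕ) + 1 < i) :
    AW m i j = 0 := by
  simp only [AW, of_apply, Fin.ext_iff]
  split_ifs <;> first | omega | norm_num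

theorem apply_self (n : ℕ) (i : Fin (n + 2)) : AW (n + 3) i i = -((i : ℚ) + 1) := by
  have : (i : ℕ) ≠ n + 1 ∨ (i : ℕ) ≠ 0 := by omega
  simp only [AW, of_apply]
  split_ifs <;> first | omega | ring

theorem apply_succ_castSucc (n : ℕ) (i : Fin (n + 1)) :
    AW (n + 3) i.succ i.castSucc = (i : ℚ) + 2 := by
  simp only [AW, of_apply, Fin.val_succ, Fin.val_castSucc, Fin.ext_iff]
  split_ifs <;> first | omega | push_cast; ring

theorem apply_zero_last (n : ℕ) : AW (n + 3) (0 : Fin (n + 2)) (Fin.last _) = n + 3 := by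
  simp [AW]

end AW

/-- The characteristic polynomial of `A_W` is `φ_m(λ) = ∏_{i=1}^{m-1}(λ + i) - m!`. -/
theorem charpoly_AW (m : ℕ) (hm : 2 ≤ m) :
    (AW m).charpoly =
      (∏ i ∈ Finset.range (m - 1), (X + C ((i : ℚ) + 1))) - C ((m.factorial : ℚ)) := by
  match m, hm with
  | 2, _ =>
    -- the corner entry falls on the diagonal, so `A_W = (1)`
    rw [charpoly, det_fin_one, charmatrix_apply_eq]
    simp [AW]
    ring
  | n + 3, _ =>
    rw [charpoly_of_bidiagonal_add_corner _ (fun _ _ => AW.apply_of_lt)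
      (fun _ _ => AW.apply_of_succ_lt (m := n + 3))]
    simp only [AW.apply_self, AW.apply_succ_castSucc, AW.apply_zero_last, prod_fin_natCast_add_two,
      map_neg, sub_neg_eq_add]
    rw [show n + 3 - 1 = n + 2 from rfl,
      ← Fin.prod_univ_eq_prod_range (fun i => X + C ((i : ℚ) + 1)),
      Nat.factorial_succ (n + 1 + 1)]
    congr 2
    push_cast
    ring
end

section
/- For m ≥ 2, λ = 1 is a root of φ_m(λ) = ∏_{i=1}^{m-1}(λ+i) - m!, and all roots of φ_m are simple. -/
/-!
Write `φ_m = P - m!` with `P = ∏_{i=1}^{n} (X + i)` and `n = m - 1`. At a double root `z` we have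
`P(z) = m! ≠ 0` and `P'(z) = P(z) · ∑ 1/(z+i) = 0`. The imaginary part of `∑ 1/(z+i)` is
`-Im z · ∑ 1/|z+i|²`, so `z` is real; the terms then take both signs, so `-n < z < -1`. Splitting the
factors at `k = ⌊-z⌋` gives `|P(z)| ≤ k! (n-k)! ≤ n! < m!`, a contradiction.
-/

open Polynomial

/-- The characteristic polynomial `φ_m(λ) = ∏_{i=1}^{m-1}(λ+i) - m!` of the
`m`-ary search tree urn matrix, as a polynomial over `ℂ`. -/
noncomputable def phi (m : ℕ) : Polynomial ℂ :=
  (∏ i ∈ Finset.range (m - 1), (X + C ((i : ℂ) + 1))) - C ((m.factorial : ℂ))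

open Finset
open scoped Nat

theorem Polynomial.eval_derivative_prod_X_add_C {K ι : Type*} [Field K] (s : Finset ι)
    (a : ι → K) {z : K} (hz : ∀ i ∈ s, z + a i ≠ 0) :
    (∏ i ∈ s, (X + C (a i))).derivative.eval z =
      (∏ i ∈ s, (z + a i)) * ∑ i ∈ s, (z + a i)⁻¹ := by
  classical
  rw [derivative_prod_finset, eval_finsetSum, mul_sum]
  refine sum_congr rfl fun i hi => ?_
  simp only [eval_prod, eval_add, eval_X, eval_C, derivative_add, derivative_X, derivative_C,
    add_zero, mul_one]
  rw [← prod_erase_mul s _ hi, mul_inv_cancel_right₀ (hz i hi)]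

theorem Complex.im_sum_inv_add_ofReal {ι : Type*} (s : Finset ι) (a : ι → ℝ) (z : ℂ) :
    (∑ i ∈ s, (z + a i)⁻¹).im = -z.im * ∑ i ∈ s, (normSq (z + a i))⁻¹ := by
  simp only [im_sum, inv_im, add_im, ofReal_im, add_zero, mul_sum, div_eq_mul_inv]

theorem Complex.im_eq_zero_of_sum_inv_add_ofReal_eq_zero {ι : Type*} {s : Finset ι}
    (hs : s.Nonempty) {a : ι → ℝ} {z : ℂ} (h : ∑ i ∈ s, (z + a i)⁻¹ = 0) : z.im = 0 := by
  by_contra him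
  have hpos : 0 < ∑ i ∈ s, (normSq (z + a i))⁻¹ :=
    sum_pos (fun i _ => inv_pos.mpr <| normSq_pos.mpr fun h0 => him <| by
      simpa using congrArg im h0) hs
  have hsum := im_sum_inv_add_ofReal s a z
  rw [h, zero_im, eq_comm, mul_eq_zero, neg_eq_zero] at hsum
  exact hsum.elim him hpos.ne'

theorem neg_lt_and_lt_neg_one_of_sum_inv_eq_zero {n : ℕ} (hn : 0 < n) {x : ℝ}
    (hx : x + 1 ≠ 0) (h : ∑ i ∈ range n, (x + (i + 1))⁻¹ = 0) : -n < x ∧ x < -1 := by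
  have hne : ∃ i ∈ range n, (x + (i + 1))⁻¹ ≠ 0 :=
    ⟨0, mem_range.mpr hn, by simpa using hx⟩
  obtain ⟨i, hi, hpos⟩ := exists_pos_of_sum_zero_of_exists_nonzero _ h hne
  obtain ⟨j, -, hneg⟩ := exists_pos_of_sum_zero_of_exists_nonzero
    (fun i : ℕ => -(x + (i + 1))⁻¹) (by rw [sum_neg_distrib, h, neg_zero]) (by simpa using hne)
  have hin : (i : ℝ) + 1 ≤ n := by exact_mod_cast mem_range.mp hi
  have hj : (0 : ℝ) ≤ j := j.cast_nonneg
  constructor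
  · linarith [inv_pos.mp hpos]
  · linarith [inv_lt_zero.mp (neg_pos.mp hneg)]

theorem prod_range_abs_add_le_factorial_mul_factorial {x : ℝ} {k n : ℕ} (hkn : k ≤ n)
    (hlo : -(k + 1 : ℝ) ≤ x) (hhi : x ≤ -k) :
    ∏ i ∈ range n, |x + (i + 1)| ≤ k ! * (n - k)! := by
  obtain ⟨l, rfl⟩ := Nat.exists_eq_add_of_le hkn
  rw [prod_range_add, Nat.add_sub_cancel_left, ← prod_range_reflect,
    ← prod_range_add_one_eq_factorial, ← prod_range_add_one_eq_factorial]
  push_cast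
  gcongr with i hi i hi
  · have hik : i + 1 ≤ k := mem_range.mp hi
    rw [Nat.sub_sub, Nat.cast_sub (by omega)]
    push_cast
    exact abs_le.mpr ⟨by linarith, by linarith⟩
  · exact abs_le.mpr ⟨by linarith, by linarith⟩

theorem prod_range_abs_add_le_factorial {x : ℝ} {n : ℕ} (hlo : -n ≤ x) (hhi : x ≤ 0) :
    ∏ i ∈ range n, |x + (i + 1)| ≤ n ! := by
  have hk := Nat.floor_le (neg_nonneg.mpr hhi)
  have hk' := Nat.lt_floor_add_one (-x)
  have hkn : ⌊-x⌋₊ ≤ n := Nat.floor_le_of_le (by linarith)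
  calc ∏ i ∈ range n, |x + (i + 1)|
      ≤ (⌊-x⌋₊)! * (n - ⌊-x⌋₊)! :=
        prod_range_abs_add_le_factorial_mul_factorial hkn (by linarith) (by linarith)
    _ ≤ n ! := by
      have := Nat.factorial_mul_factorial_dvd_factorial_add ⌊-x⌋₊ (n - ⌊-x⌋₊)
      rw [Nat.add_sub_cancel' hkn] at this
      exact_mod_cast Nat.le_of_dvd n.factorial_pos this

theorem abs_prod_range_add_le_factorial_of_sum_inv_eq_zero {n : ℕ} (hn : 0 < n) {x : ℝ}
    (hx : x + 1 ≠ 0) (h : ∑ i ∈ range n, (x + (i + 1))⁻¹ = 0) :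
    |∏ i ∈ range n, (x + (i + 1))| ≤ n ! := by
  obtain ⟨hlo, hhi⟩ := neg_lt_and_lt_neg_one_of_sum_inv_eq_zero hn hx h
  rw [abs_prod]
  exact prod_range_abs_add_le_factorial hlo.le (by linarith)

theorem phi_eval_one {m : ℕ} (hm : 1 ≤ m) : (phi m).eval 1 = 0 := by
  obtain ⟨n, rfl⟩ := Nat.exists_eq_add_of_le' hm
  have hprod : ∏ i ∈ range n, ((1 : ℂ) + ((i : ℂ) + 1)) = (n + 1)! := by
    rw [← prod_range_add_one_eq_factorial, prod_range_succ']
    push_cast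
    rw [mul_one]
    exact prod_congr rfl fun i _ => by ring
  simp [phi, eval_prod, hprod]

theorem phi_derivative_not_isRoot {m : ℕ} (hm : 2 ≤ m) {z : ℂ} (hz : (phi m).IsRoot z) :
    ¬ (phi m).derivative.IsRoot z := by
  obtain ⟨n, rfl⟩ := Nat.exists_eq_add_of_le' (by omega : 1 ≤ m)
  have hn : 0 < n := by omega
  have hprod : ∏ i ∈ range n, (z + ((i : ℂ) + 1)) = (n + 1)! := by
    simpa [phi, eval_prod, sub_eq_zero] using hz
  have hfac : ((n + 1)! : ℂ) ≠ 0 := by exact_mod_cast (n + 1).factorial_ne_zero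
  have hne : ∀ i ∈ range n, z + ((i : ℂ) + 1) ≠ 0 := fun i hi h0 =>
    hfac (hprod ▸ prod_eq_zero hi h0)
  intro hder
  have hsum : ∑ i ∈ range n, (z + ((i : ℂ) + 1))⁻¹ = 0 := by
    simp only [IsRoot, phi, Nat.add_sub_cancel, derivative_sub, derivative_C, sub_zero,
      eval_derivative_prod_X_add_C _ _ hne, hprod] at hder
    exact (mul_eq_zero.mp hder).resolve_left hfac
  obtain ⟨x, rfl⟩ : ∃ x : ℝ, z = x := ⟨z.re, Complex.ext rfl <|
    Complex.im_eq_zero_of_sum_inv_add_ofReal_eq_zero (a := fun i : ℕ => (i + 1 : ℝ))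
      (nonempty_range_iff.mpr hn.ne') (by exact_mod_cast hsum)⟩
  have hx1 : x + 1 ≠ 0 := by
    have h0 := hne 0 (mem_range.mpr hn)
    rw [Nat.cast_zero, zero_add] at h0
    exact_mod_cast h0
  have hle := abs_prod_range_add_le_factorial_of_sum_inv_eq_zero hn hx1
    (by exact_mod_cast hsum)
  rw [(by exact_mod_cast hprod : ∏ i ∈ range n, (x + ((i : ℝ) + 1)) = (n + 1)!),
    Nat.abs_cast, Nat.cast_le] at hle
  exact ((Nat.factorial_lt hn).mpr n.lt_succ_self).not_ge hle

/-- `λ = 1` is a root of `φ_m`, and all roots of `φ_m` are simple. -/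
theorem phi_root_one_and_simple_roots (m : ℕ) (hm : 2 ≤ m) :
    (phi m).eval 1 = 0 ∧ ∀ z : ℂ, (phi m).rootMultiplicity z ≤ 1 := by
  refine ⟨phi_eval_one (by omega), fun z => ?_⟩
  by_cases h0 : phi m = 0
  · simp [h0]
  by_contra! hz
  obtain ⟨hroot, hder⟩ := (one_lt_rootMultiplicity_iff_isRoot h0).mp hz
  exact phi_derivative_not_isRoot hm hroot hder
end

section
/- For m ≥ 3, the characteristic polynomial of the m×m matrix A_L with entries A_L[i,i] = -i for 1 ≤ i ≤ m, A_L[i,i-1] = i for 2 ≤ i ≤ m, A_L[1,m] = m-1, A_L[2,m] = 2, and all other entries 0, equals (λ + m)·φ_m(λ), where φ_m(λ) = ∏_{i=1}^{m-1}(λ+i) - m!. -/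
/-!
The characteristic matrix `λ - A_L` is lower bidiagonal except for its last column, which has
only three nonzero entries, in rows `1`, `2` and `m`. Expanding such a matrix along its first row
gives a recursion whose solution is a sum over the entries `c_k` of the last column, the `k`-th
term being `± c_k` times the diagonal entries above row `k` times the subdiagonal entries below
it. For `A_L` the three terms are `(λ + m) ∏ (λ + i)`, `-(m - 1) m!` and `-(λ + 1) m!`, and the
last two add up to `-(λ + m) m!`.
-/

open Polynomial

/-- The replacement matrix `A_L` for the leaf-urn of an `m`-ary search tree
(`m ≥ 3`): `A_L[i,i] = -i` (1-indexed), `A_L[i,i-1] = i`, `A_L[1,m] = m-1`,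
`A_L[2,m] = 2`, all other entries 0. -/
def AL (m : ℕ) : Matrix (Fin m) (Fin m) ℚ :=
  Matrix.of fun i j =>
    if i = j then -((i : ℚ) + 1)
    else if (i : ℕ) = (j : ℕ) + 1 then (i : ℚ) + 1
    else if (i : ℕ) = 0 ∧ (j : ℕ) = m - 1 then (m : ℚ) - 1
    else if (i : ℕ) = 1 ∧ (j : ℕ) = m - 1 then 2
    else 0

section LowerBidiagWithLastCol

variable {R : Type*} [CommRing R]

def lowerBidiagWithLastCol (n : ℕ) (a b c : ℕ → R) : Matrix (Fin (n + 1)) (Fin (n + 1)) R :=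
  Matrix.of fun i j =>
    if (j : ℕ) = n then c i
    else if (i : ℕ) = j then a j
    else if (i : ℕ) = j + 1 then b j
    else 0

variable (n : ℕ) (a b c : ℕ → R)

theorem lowerBidiagWithLastCol_submatrix_succ_succ :
    (lowerBidiagWithLastCol (n + 1) a b c).submatrix Fin.succ Fin.succ =
      lowerBidiagWithLastCol n (fun i => a (i + 1)) (fun i => b (i + 1)) (fun i => c (i + 1)) := by
  ext i j
  simp [lowerBidiagWithLastCol]

theorem det_lowerBidiagWithLastCol_submatrix_succ_castSucc :
    ((lowerBidiagWithLastCol (n + 1) a b c).submatrix Fin.succ Fin.castSucc).det =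
      ∏ i ∈ Finset.range (n + 1), b i := by
  rw [Matrix.det_of_isUpperTriangular, ← Fin.prod_univ_eq_prod_range]
  · refine Finset.prod_congr rfl fun i _ => ?_
    simp [lowerBidiagWithLastCol, i.isLt.ne]
  · intro i j (hji : j < i)
    rw [Fin.lt_def] at hji
    simp only [lowerBidiagWithLastCol, Matrix.submatrix_apply, Matrix.of_apply, Fin.val_succ,
      Fin.val_castSucc, j.isLt.ne, if_false]
    rw [if_neg (by omega), if_neg (by omega)]

theorem det_lowerBidiagWithLastCol_succ :
    (lowerBidiagWithLastCol (n + 1) a b c).det =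
      a 0 * (lowerBidiagWithLastCol n (fun i => a (i + 1)) (fun i => b (i + 1))
          (fun i => c (i + 1))).det +
        (-1) ^ (n + 1) * c 0 * ∏ i ∈ Finset.range (n + 1), b i := by
  rw [Matrix.det_succ_row_zero, Fin.sum_univ_succ, Fin.sum_univ_castSucc,
    Finset.sum_eq_zero, zero_add]
  · rw [Fin.succAbove_zero, Fin.succ_last, Fin.succAbove_last,
      lowerBidiagWithLastCol_submatrix_succ_succ,
      det_lowerBidiagWithLastCol_submatrix_succ_castSucc]
    simp [lowerBidiagWithLastCol]
  · intro j _
    simp [lowerBidiagWithLastCol, j.isLt.ne]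

theorem det_lowerBidiagWithLastCol :
    (lowerBidiagWithLastCol n a b c).det =
      ∑ k ∈ Finset.range (n + 1),
        (-1) ^ (n + k) * c k * (∏ i ∈ Finset.range k, a i) * ∏ i ∈ Finset.Ico k n, b i := by
  induction n generalizing a b c with
  | zero => simp [Matrix.det_unique, lowerBidiagWithLastCol]
  | succ n ih =>
    rw [det_lowerBidiagWithLastCol_succ, ih, Finset.sum_range_succ' _ (n + 1), Finset.mul_sum]
    congr 1
    · refine Finset.sum_congr rfl fun k _ => ?_
      rw [Finset.prod_range_succ', ← Finset.prod_Ico_add' b k n 1]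
      ring
    · simp

end LowerBidiagWithLastCol

theorem prod_range_neg_add_two {R : Type*} [CommRing R] (k : ℕ) :
    ∏ i ∈ Finset.range k, -((i : R) + 2) = (-1) ^ k * ((k + 1).factorial : R) := by
  induction k with
  | zero => simp
  | succ k ih =>
    rw [Finset.prod_range_succ, ih, Nat.factorial_succ (k + 1)]
    push_cast
    ring

theorem charmatrix_AL (n : ℕ) :
    (AL (n + 1)).charmatrix =
      lowerBidiagWithLastCol n (fun i => X + ((i : ℚ[X]) + 1)) (fun i => -((i : ℚ[X]) + 2))
        (fun i => if i = n then X + ((n : ℚ[X]) + 1) else if i = 0 then -(n : ℚ[X])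
          else if i = 1 then -2 else 0) := by
  ext i j : 1
  by_cases hij : i = j
  · subst hij
    simp only [Matrix.charmatrix_apply_eq, AL, lowerBidiagWithLastCol, Matrix.of_apply]
    split_ifs <;> simp_all <;> ring
  rw [Matrix.charmatrix_apply_ne _ _ _ hij]
  have hij' : (i : ℕ) ≠ j := Fin.val_ne_of_ne hij
  simp only [AL, lowerBidiagWithLastCol, Matrix.of_apply, if_neg hij, if_neg hij',
    Nat.add_sub_cancel]
  by_cases hj : (j : ℕ) = n
  · have hin : (i : ℕ) ≠ n := by omega
    have hi : (i : ℕ) ≠ n + 1 := by omega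
    simp only [hj, hin, hi, if_true, if_false, and_true, Nat.cast_succ, add_sub_cancel_right]
    split_ifs <;> simp [map_ofNat]
  · simp only [hj, if_false, and_false]
    split_ifs with hsub
    · rw [hsub]
      push_cast
      simp only [map_add, map_natCast, map_one]
      ring
    · simp

/-- The characteristic polynomial of `A_L` is `(λ + m)·φ_m(λ)` with
`φ_m(λ) = ∏_{i=1}^{m-1}(λ+i) - m!`. -/
theorem charpoly_AL (m : ℕ) (hm : 3 ≤ m) :
    (AL m).charpoly =
      (X + C ((m : ℚ))) *
        ((∏ i ∈ Finset.range (m - 1), (X + C ((i : ℚ) + 1))) - C ((m.factorial : ℚ))) := by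
  obtain ⟨n, rfl⟩ : ∃ n, m = n + 3 := ⟨m - 3, by omega⟩
  rw [Matrix.charpoly, charmatrix_AL (n + 2), det_lowerBidiagWithLastCol, Finset.sum_range_succ,
    Finset.sum_range_succ', Finset.sum_range_succ',
    Finset.sum_eq_zero fun k hk => by simp [(Finset.mem_range.mp hk).ne],
    Finset.prod_eq_prod_Ico_succ_bot (by omega : 0 < n + 2)]
  have hfact := prod_range_neg_add_two (R := ℚ[X]) (n + 2)
  rw [Finset.range_eq_Ico, Finset.prod_eq_prod_Ico_succ_bot (by omega : 0 < n + 2)] at hfact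
  generalize ∏ i ∈ Finset.Ico 1 (n + 2), -((i : ℚ[X]) + 2) = P at hfact ⊢
  have hsign : ((-1 : ℚ[X]) ^ (n + 2)) ^ 2 = 1 := by
    rw [← pow_mul]
    exact Even.neg_one_pow ⟨n + 2, by ring⟩
  simp only [map_add, map_natCast, map_one]
  norm_num at hfact ⊢
  linear_combination (X + ((n : ℚ[X]) + 3)) *
    (-(-1) ^ (n + 2) * hfact - ((n + 3).factorial : ℚ[X]) * hsign)
end
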